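/- Let Λ be a finite-dimensional algebra. Suppose that for every n ≥ 1 there exist finite-length Λ-modules M(n), R(n), W(n) with uniform inclusions M(n−1) ⊂ R(n) ⊂ W(n), couniform projections M(n) → R(n) and R(n+1) → W(n), and W(1) uniform. Then all M(n), R(n), W(n) are accessible, and Λ has accessible modules of arbitrarily large length (the lengths of W(n) tend to infinity since length W(n) > length R(n) > length M(n−1)). -/

import Mathlib

universe u v

/-- A module is indecomposable: nonzero and with no nontrivial direct decomposition. -/
def Indec (Λ : Type*) [Ring Λ] (M : Type*) [AddCommGroup M] [Module Λ M] : Prop :=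
  Nontrivial M ∧ ∀ A B : Submodule Λ M, IsCompl A B → A = ⊥ ∨ B = ⊥

/-- Accessible modules, defined inductively: simple modules are accessible; an
indecomposable module with an accessible maximal submodule, or with an accessible
quotient by a simple submodule, is accessible. -/
inductive Accessible (Λ : Type u) [Ring Λ] : (M : Type v) → [AddCommGroup M] → [Module Λ M] → Prop where
  | of_simple {M : Type v} [AddCommGroup M] [Module Λ M] :
      IsSimpleModule Λ M → Accessible Λ M
  | of_submodule {M : Type v} [AddCommGroup M] [Module Λ M] (N : Submodule Λ M) :
      Indec Λ M → IsCoatom N → Accessible Λ N → Accessible Λ M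
  | of_quotient {M : Type v} [AddCommGroup M] [Module Λ M] (N : Submodule Λ M) :
      Indec Λ M → IsAtom N → Accessible Λ (M ⧸ N) → Accessible Λ M

/-- The length of a module, as the Krull dimension of its submodule lattice. -/
noncomputable def moduleLength (Λ : Type*) [Ring Λ] (M : Type*) [AddCommGroup M]
    [Module Λ M] : WithBot ℕ∞ :=
  Order.krullDim (Submodule Λ M)

section Aux

variable {Λ : Type u} [Ring Λ]

/-- Indecomposability transfers along linear equivalences. -/
theorem Indec.congr {M : Type*} [AddCommGroup M] [Module Λ M]
    {M' : Type*} [AddCommGroup M'] [Module Λ M']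
    (h : Indec Λ M) (e : M ≃ₗ[Λ] M') : Indec Λ M' := by
  obtain ⟨h1, h2⟩ := h
  haveI := h1
  refine ⟨e.symm.toEquiv.nontrivial, ?_⟩
  intro A B hAB
  set f := Submodule.orderIsoMapComap e.symm with hf
  rcases h2 (f A) (f B) (f.isCompl hAB) with h | h
  · left
    have := congrArg f.symm h
    simpa using this
  · right
    have := congrArg f.symm h
    simpa using this

/-- Accessibility transfers along linear equivalences. -/
theorem Accessible.congr : ∀ {M : Type v} [AddCommGroup M] [Module Λ M], Accessible Λ M →
    ∀ {M' : Type v} [AddCommGroup M'] [Module Λ M'] (_ : M ≃ₗ[Λ] M'), Accessible Λ M' := by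
  intro M _ _ h
  induction h with
  | @of_simple M _ _ hs =>
    intro M' _ _ e
    haveI := hs
    exact .of_simple (IsSimpleModule.congr e.symm)
  | @of_submodule M _ _ N hind hco _ ih =>
    intro M' _ _ e
    refine .of_submodule (Submodule.map (e : M →ₗ[Λ] M') N) (hind.congr e) ?_ (ih (e.submoduleMap N))
    rw [← Submodule.orderIsoMapComap_apply e N]
    exact (OrderIso.isCoatom_iff _ _).2 hco
  | @of_quotient M _ _ N hind hat _ ih =>
    intro M' _ _ e
    refine .of_quotient (Submodule.map (e : M →ₗ[Λ] M') N) (hind.congr e) ?_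
      (ih (Submodule.Quotient.equiv N (Submodule.map (e : M →ₗ[Λ] M') N) e rfl))
    rw [← Submodule.orderIsoMapComap_apply e N]
    exact (OrderIso.isAtom_iff _ _).2 hat

/-- Proposition 1 (uniform inclusions propagate accessibility): if `U` is an
accessible submodule of `M` such that every intermediate submodule is
indecomposable, then `M` is accessible. -/
theorem accessible_of_le {M : Type v} [AddCommGroup M] [Module Λ M]
    [IsNoetherian Λ M] [IsArtinian Λ M] (U : Submodule Λ M)
    (hU : Accessible Λ U)
    (hind : ∀ V : Submodule Λ M, U ≤ V → Indec Λ V) : Accessible Λ M := by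
  revert hU hind
  refine IsWellFounded.induction (α := Submodule Λ M) (· > ·)
    (motive := fun U => Accessible Λ U → (∀ V : Submodule Λ M, U ≤ V → Indec Λ V) → Accessible Λ M)
    U ?_
  intro U ih hU hind
  rcases eq_or_lt_of_le (le_top : U ≤ ⊤) with htop | hlt
  · exact hU.congr (LinearEquiv.ofEq _ _ htop ≪≫ₗ Submodule.topEquiv)
  · obtain ⟨V, hV, hVmin⟩ := (IsWellFounded.wf (r := ((· < ·) : Submodule Λ M → _ → _))).has_min
      {V | U < V} ⟨⊤, hlt⟩
    have hUV : U < V := hV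
    have hmapU' : (U.comap V.subtype).map V.subtype = U := by
      rw [Submodule.map_comap_subtype, inf_eq_right.2 hUV.le]
    have hmapinj : Function.Injective (Submodule.map V.subtype) :=
      Submodule.map_injective_of_injective V.injective_subtype
    have hco : IsCoatom (U.comap V.subtype) := by
      constructor
      · intro h
        apply hUV.ne
        have := congrArg (Submodule.map V.subtype) h
        rwa [hmapU', Submodule.map_top, Submodule.range_subtype] at this
      · intro W hW
        have hmapW : U < W.map V.subtype := by
          rw [← hmapU']
          exact lt_of_le_of_ne (Submodule.map_mono hW.le) (fun h => hW.ne (hmapinj h))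
        have hle : W.map V.subtype ≤ V := by
          simpa using (LinearMap.map_le_range : W.map V.subtype ≤ LinearMap.range V.subtype)
        have hWV : W.map V.subtype = V := by
          by_contra hne
          exact hVmin _ hmapW (lt_of_le_of_ne hle hne)
        apply hmapinj
        rw [hWV, Submodule.map_top, Submodule.range_subtype]
    have haccV : Accessible Λ V :=
      .of_submodule (U.comap V.subtype) (hind V hUV.le) hco
        (hU.congr (Submodule.comapSubtypeEquivOfLe hUV.le).symm)
    exact ih V hUV haccV (fun W hW => hind W (hUV.le.trans hW))

/-- Proposition 2 (couniform projections propagate accessibility): if `X` is a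
submodule of `M` such that `M ⧸ X` is accessible and `M ⧸ Y` is indecomposable
for every `Y ≤ X`, then `M` is accessible. -/
theorem accessible_of_quot {M : Type v} [AddCommGroup M] [Module Λ M]
    [IsNoetherian Λ M] [IsArtinian Λ M] (X : Submodule Λ M)
    (hX : Accessible Λ (M ⧸ X))
    (hind : ∀ Y : Submodule Λ M, Y ≤ X → Indec Λ (M ⧸ Y)) : Accessible Λ M := by
  revert hX hind
  refine IsWellFounded.induction (α := Submodule Λ M) (· < ·)
    (motive := fun X => Accessible Λ (M ⧸ X) → (∀ Y : Submodule Λ M, Y ≤ X → Indec Λ (M ⧸ Y)) →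
      Accessible Λ M)
    X ?_
  intro X ih hX hind
  rcases eq_or_lt_of_le (bot_le : ⊥ ≤ X) with hbot | hlt
  · exact hX.congr (Submodule.quotEquivOfEqBot X hbot.symm)
  · obtain ⟨Y, hY, hYmax⟩ := (IsWellFounded.wf (r := ((· > ·) : Submodule Λ M → _ → _))).has_min
      {Y | Y < X} ⟨⊥, hlt⟩
    have hYX : Y < X := hY
    have hq : Function.Surjective Y.mkQ := Submodule.mkQ_surjective Y
    have hcomapinj : Function.Injective (Submodule.comap Y.mkQ) :=
      Submodule.comap_injective_of_surjective hq
    have hcomapN : (X.map Y.mkQ).comap Y.mkQ = X := by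
      rw [Submodule.comap_map_mkQ, sup_eq_right.2 hYX.le]
    have hat : IsAtom (X.map Y.mkQ) := by
      constructor
      · intro h
        apply hYX.ne'
        rw [← hcomapN, h, Submodule.comap_bot, Submodule.ker_mkQ]
      · intro Z hZ
        have hcZ : Z.comap Y.mkQ < X := by
          rw [← hcomapN]
          exact lt_of_le_of_ne (Submodule.comap_mono hZ.le) (fun h => hZ.ne (hcomapinj h))
        have hY_le : Y ≤ Z.comap Y.mkQ := by
          calc Y = Submodule.comap Y.mkQ ⊥ := by rw [Submodule.comap_bot, Submodule.ker_mkQ]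
          _ ≤ _ := Submodule.comap_mono bot_le
        have hZY : Z.comap Y.mkQ = Y := by
          by_contra hne
          exact hYmax _ hcZ (lt_of_le_of_ne hY_le (Ne.symm hne))
        have := congrArg (Submodule.map Y.mkQ) hZY
        rw [Submodule.map_comap_eq_of_surjective hq] at this
        rw [this]
        exact LinearMap.le_ker_iff_map.1 (le_of_eq (Submodule.ker_mkQ Y).symm)
    have haccQY : Accessible Λ (M ⧸ Y) :=
      .of_quotient (X.map Y.mkQ) (hind Y hYX.le) hat
        (hX.congr (Submodule.quotientQuotientEquivQuotient Y X hYX.le).symm)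
    exact ih Y hYX haccQY (fun Z hZ => hind Z (hZ.trans hYX.le))

/-- A nontrivial finite-length uniform module is accessible. -/
theorem accessible_of_uniform {M : Type v} [AddCommGroup M] [Module Λ M]
    [IsNoetherian Λ M] [IsArtinian Λ M] (h1 : Nontrivial M)
    (h : ∀ U : Submodule Λ M, U ≠ ⊥ → Indec Λ U) : Accessible Λ M := by
  haveI := h1
  have htb : (⊤ : Submodule Λ M) ≠ ⊥ := by
    obtain ⟨x, hx⟩ := exists_ne (0 : M)
    intro hc
    apply hx
    have hm : x ∈ (⊥ : Submodule Λ M) := by rw [← hc]; exact Submodule.mem_top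
    simpa using hm
  haveI : IsAtomic (Submodule Λ M) :=
    isAtomic_of_orderBot_wellFounded_lt (IsWellFounded.wf)
  obtain ⟨A, hA, hAle⟩ := ((eq_bot_or_exists_atom_le (⊤ : Submodule Λ M)).resolve_left htb)
  have haccA : Accessible Λ A := .of_simple (isSimpleModule_iff_isAtom.2 hA)
  exact accessible_of_le A haccA (fun V hAV => h V (fun hb => hA.1 (le_bot_iff.1 (hb ▸ hAV))))

end Aux

/-- Combination of Propositions 1 and 2: if for every `n ≥ 1` there are
finite-length modules `M(n)`, `R(n)`, `W(n)` with proper uniform inclusions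
`M(n−1) ⊂ R(n) ⊂ W(n)`, couniform projections `M(n) → R(n)` and `R(n+1) → W(n)`,
and `W(1)` is a uniform module, then all the modules `M(n)`, `R(n)`, `W(n)`
(`n ≥ 1`) are accessible and `Λ` has accessible modules of arbitrarily large
length.  (Indices: `M n`, `R (n+1)`, `W (n+1)` below stand for `M(n)`, `R(n+1)`,
`W(n+1)` with `n ≥ 0`.) -/
theorem accessible_chain
    (Λ : Type u) [Ring Λ]
    (M R W : ℕ → Type v)
    [∀ n, AddCommGroup (M n)] [∀ n, Module Λ (M n)]
    [∀ n, AddCommGroup (R n)] [∀ n, Module Λ (R n)]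
    [∀ n, AddCommGroup (W n)] [∀ n, Module Λ (W n)]
    (hflM : ∀ n, IsFiniteLength Λ (M n))
    (hflR : ∀ n, IsFiniteLength Λ (R n))
    (hflW : ∀ n, IsFiniteLength Λ (W n))
    -- uniform proper inclusions M(n) ⊂ R(n+1)
    (ι₁ : ∀ n, M n →ₗ[Λ] R (n + 1))
    (hι₁inj : ∀ n, Function.Injective (ι₁ n))
    (hι₁prop : ∀ n, LinearMap.range (ι₁ n) ≠ ⊤)
    (hι₁unif : ∀ n, ∀ U : Submodule Λ (R (n + 1)),
      LinearMap.range (ι₁ n) ≤ U → Indec Λ U)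
    -- uniform proper inclusions R(n+1) ⊂ W(n+1)
    (ι₂ : ∀ n, R (n + 1) →ₗ[Λ] W (n + 1))
    (hι₂inj : ∀ n, Function.Injective (ι₂ n))
    (hι₂prop : ∀ n, LinearMap.range (ι₂ n) ≠ ⊤)
    (hι₂unif : ∀ n, ∀ U : Submodule Λ (W (n + 1)),
      LinearMap.range (ι₂ n) ≤ U → Indec Λ U)
    -- couniform projections M(n+1) → R(n+1)
    (π₁ : ∀ n, M (n + 1) →ₗ[Λ] R (n + 1))
    (hπ₁surj : ∀ n, Function.Surjective (π₁ n))
    (hπ₁couni : ∀ n, ∀ X : Submodule Λ (M (n + 1)),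
      X ≤ LinearMap.ker (π₁ n) → Indec Λ (M (n + 1) ⧸ X))
    -- couniform projections R(n+2) → W(n+1)
    (π₂ : ∀ n, R (n + 2) →ₗ[Λ] W (n + 1))
    (hπ₂surj : ∀ n, Function.Surjective (π₂ n))
    (hπ₂couni : ∀ n, ∀ X : Submodule Λ (R (n + 2)),
      X ≤ LinearMap.ker (π₂ n) → Indec Λ (R (n + 2) ⧸ X))
    -- W(1) is a uniform module
    (hW1 : Nontrivial (W 1) ∧ ∀ U : Submodule Λ (W 1), U ≠ ⊥ → Indec Λ U) :
    (∀ n : ℕ, Accessible Λ (M (n + 1)) ∧ Accessible Λ (R (n + 1)) ∧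
      Accessible Λ (W (n + 1))) ∧
    ∀ c : ℕ, ∃ n : ℕ, (c : WithBot ℕ∞) < moduleLength Λ (W (n + 1)) := by
  haveI instM : ∀ n, IsNoetherian Λ (M n) ∧ IsArtinian Λ (M n) :=
    fun n => isFiniteLength_iff_isNoetherian_isArtinian.mp (hflM n)
  haveI instR : ∀ n, IsNoetherian Λ (R n) ∧ IsArtinian Λ (R n) :=
    fun n => isFiniteLength_iff_isNoetherian_isArtinian.mp (hflR n)
  haveI instW : ∀ n, IsNoetherian Λ (W n) ∧ IsArtinian Λ (W n) :=
    fun n => isFiniteLength_iff_isNoetherian_isArtinian.mp (hflW n)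
  -- R(n+1) is indecomposable (being a couniform image of M(n+1))
  have hRindec : ∀ n, Indec Λ (R (n + 1)) := fun n =>
    (hπ₁couni n (LinearMap.ker (π₁ n)) le_rfl).congr
      ((π₁ n).quotKerEquivOfSurjective (hπ₁surj n))
  -- W(1) is accessible
  have hW1acc : Accessible Λ (W 1) := by
    haveI := (instW 1).1; haveI := (instW 1).2
    exact accessible_of_uniform hW1.1 hW1.2
  -- R(1) is (uniform hence) accessible
  have hR1acc : Accessible Λ (R 1) := by
    haveI := (instR 1).1; haveI := (instR 1).2
    apply accessible_of_uniform (hRindec 0).1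
    intro V hV
    have hmap : V.map (ι₂ 0) ≠ ⊥ := by
      intro hc
      apply hV
      have := LinearMap.le_ker_iff_map.2 hc
      rwa [LinearMap.ker_eq_bot.2 (hι₂inj 0), le_bot_iff] at this
    exact (hW1.2 _ hmap).congr (Submodule.equivMapOfInjective (ι₂ 0) (hι₂inj 0) V).symm
  -- the propagation steps
  have stepW : ∀ n, Accessible Λ (R (n + 1)) → Accessible Λ (W (n + 1)) := by
    intro n h
    haveI := (instW (n + 1)).1; haveI := (instW (n + 1)).2
    exact accessible_of_le (LinearMap.range (ι₂ n))
      (h.congr (LinearEquiv.ofInjective (ι₂ n) (hι₂inj n))) (hι₂unif n)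
  have stepR : ∀ n, Accessible Λ (W (n + 1)) → Accessible Λ (R (n + 2)) := by
    intro n h
    haveI := (instR (n + 2)).1; haveI := (instR (n + 2)).2
    exact accessible_of_quot (LinearMap.ker (π₂ n))
      (h.congr ((π₂ n).quotKerEquivOfSurjective (hπ₂surj n)).symm) (hπ₂couni n)
  have stepM : ∀ n, Accessible Λ (R (n + 1)) → Accessible Λ (M (n + 1)) := by
    intro n h
    haveI := (instM (n + 1)).1; haveI := (instM (n + 1)).2
    exact accessible_of_quot (LinearMap.ker (π₁ n))
      (h.congr ((π₁ n).quotKerEquivOfSurjective (hπ₁surj n)).symm) (hπ₁couni n)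
  have keyRW : ∀ n, Accessible Λ (R (n + 1)) ∧ Accessible Λ (W (n + 1)) := by
    intro n
    induction n with
    | zero => exact ⟨hR1acc, hW1acc⟩
    | succ k ih =>
      have hr := stepR k ih.2
      exact ⟨hr, stepW (k + 1) hr⟩
  refine ⟨fun n => ⟨stepM n (keyRW n).1, (keyRW n).1, (keyRW n).2⟩, ?_⟩
  -- the lengths of the W(n+1) are unbounded
  have chain : ∀ n, ∃ p : LTSeries (Submodule Λ (W (n + 1))), p.length = n + 1 := by
    intro n
    induction n with
    | zero =>
      haveI := hW1.1
      have hbt : (⊥ : Submodule Λ (W 1)) < ⊤ := by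
        refine lt_of_le_of_ne bot_le ?_
        obtain ⟨x, hx⟩ := exists_ne (0 : W 1)
        intro hc
        apply hx
        have hm : x ∈ (⊥ : Submodule Λ (W 1)) := by rw [hc]; exact Submodule.mem_top
        simpa using hm
      exact ⟨(RelSeries.singleton _ (⊥ : Submodule Λ (W 1))).snoc ⊤ hbt, rfl⟩
    | succ k ih =>
      obtain ⟨p, hp⟩ := ih
      have hcm : StrictMono (Submodule.comap (π₂ k)) := fun A B hAB =>
        lt_of_le_of_ne (Submodule.comap_mono hAB.le)
          (fun h => hAB.ne (Submodule.comap_injective_of_surjective (hπ₂surj k) h))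
      have hmm : StrictMono (Submodule.map (ι₂ (k + 1))) := fun A B hAB =>
        lt_of_le_of_ne (Submodule.map_mono hAB.le)
          (fun h => hAB.ne (Submodule.map_injective_of_injective (hι₂inj (k + 1)) h))
      set q : LTSeries (Submodule Λ (W (k + 2))) :=
        ((p.map _ hcm).map _ hmm) with hq
      have hlast : q.last < ⊤ := by
        refine lt_of_le_of_lt (LinearMap.map_le_range)
          (lt_top_iff_ne_top.2 (hι₂prop (k + 1)))
      exact ⟨q.snoc ⊤ hlast, by simp [hq, RelSeries.snoc, hp]⟩
  intro c
  obtain ⟨p, hp⟩ := chain c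
  refine ⟨c, lt_of_lt_of_le ?_ (Order.LTSeries.length_le_krullDim p)⟩
  rw [hp]
  exact_mod_cast Nat.lt_succ_self c
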